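/- arXiv:math/0603055 — 6 statements merged into one kernel-verified Lean document; each statement's English description precedes it below -/
import Mathlib

section
/- Let d and d' be two proper left invariant metrics on a group G which induce the same topology on G. Then the identity map id : (G,d) → (G,d') is a coarse equivalence; explicitly, there exist functions ρ₁, ρ₂ : [0,∞) → [0,∞) tending to infinity such that ρ₁(d(x,y)) ≤ d'(x,y) ≤ ρ₂(d(x,y)) for all x, y ∈ G. -/
open Filter

private lemma bddAbove_image_of_isCompact {X : Type*} [TopologicalSpace X] {f : X → ℝ}
    {K : Set X} (hK : IsCompact K) (hf : Continuous f) : BddAbove (f '' K) :=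
  hK.bddAbove_image hf.continuousOn

/-- Let `d` and `d'` be two proper left invariant metrics on a group `G`
inducing the same topology. Then the identity map `id : (G,d) → (G,d')` is a coarse
equivalence; explicitly, there exist functions `ρ₁, ρ₂` tending to infinity such that
`ρ₁(d(x,y)) ≤ d'(x,y) ≤ ρ₂(d(x,y))` for all `x, y ∈ G` (and the image of the identity is
`R`-dense for some `R > 0`, which is automatic here). -/
theorem identity_coarse_equivalence {G : Type*} [Group G] (m m' : MetricSpace G)
    (hinv : ∀ g x y : G, m.dist (g * x) (g * y) = m.dist x y)
    (hinv' : ∀ g x y : G, m'.dist (g * x) (g * y) = m'.dist x y)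
    (hproper : ∀ (x : G) (r : ℝ),
      @IsCompact G m.toUniformSpace.toTopologicalSpace {y : G | m.dist x y ≤ r})
    (hproper' : ∀ (x : G) (r : ℝ),
      @IsCompact G m'.toUniformSpace.toTopologicalSpace {y : G | m'.dist x y ≤ r})
    (htop : m.toUniformSpace.toTopologicalSpace = m'.toUniformSpace.toTopologicalSpace) :
    ∃ ρ₁ ρ₂ : ℝ → ℝ, Tendsto ρ₁ atTop atTop ∧ Tendsto ρ₂ atTop atTop ∧
      (∀ x y : G, ρ₁ (m.dist x y) ≤ m'.dist x y ∧ m'.dist x y ≤ ρ₂ (m.dist x y)) ∧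
      (∃ R : ℝ, 0 < R ∧ ∀ y : G, ∃ x : G, m'.dist (id x) y ≤ R) := by
  classical
  -- basic facts
  have hd0 : ∀ x y : G, 0 ≤ m.dist x y := fun x y => @dist_nonneg G m.toPseudoMetricSpace x y
  have hd'0 : ∀ x y : G, 0 ≤ m'.dist x y := fun x y => @dist_nonneg G m'.toPseudoMetricSpace x y
  have hred : ∀ x y : G, m.dist x y = m.dist 1 (x⁻¹ * y) := by
    intro x y
    have := hinv x⁻¹ x y
    rw [inv_mul_cancel] at this
    exact this.symm
  have hred' : ∀ x y : G, m'.dist x y = m'.dist 1 (x⁻¹ * y) := by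
    intro x y
    have := hinv' x⁻¹ x y
    rw [inv_mul_cancel] at this
    exact this.symm
  -- continuity of the two distance functions (in the common topology)
  have hc' : @Continuous G ℝ m.toUniformSpace.toTopologicalSpace _ (fun z => m'.dist 1 z) := by
    rw [htop]
    letI := m'
    exact continuous_const.dist continuous_id
  have hc : @Continuous G ℝ m'.toUniformSpace.toTopologicalSpace _ (fun z => m.dist 1 z) := by
    rw [← htop]
    letI := m
    exact continuous_const.dist continuous_id
  -- the upper control function
  set S : ℝ → ℝ := fun r => sSup ((fun z => m'.dist 1 z) '' {z : G | m.dist 1 z ≤ r}) with hS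
  have hbddS : ∀ r : ℝ, BddAbove ((fun z => m'.dist 1 z) '' {z : G | m.dist 1 z ≤ r}) := by
    intro r
    exact @bddAbove_image_of_isCompact G m.toUniformSpace.toTopologicalSpace
      (fun z => m'.dist 1 z) {z : G | m.dist 1 z ≤ r} (hproper 1 r) hc'
  refine ⟨fun s => if h : ((fun z => m'.dist 1 z) '' {z : G | s ≤ m.dist 1 z}).Nonempty
      then sInf ((fun z => m'.dist 1 z) '' {z : G | s ≤ m.dist 1 z}) else s,
    fun r => max r 0 + S r, ?_, ?_, ?_, 1, one_pos, fun y => ⟨y, by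
      simp [m'.dist_self y]⟩⟩
  · -- Tendsto ρ₁
    rw [tendsto_atTop]
    intro M
    -- the d'-ball of radius M is compact, hence d-bounded
    have hK : @IsCompact G m'.toUniformSpace.toTopologicalSpace {z : G | m'.dist 1 z ≤ M} :=
      hproper' 1 M
    have hKb : BddAbove ((fun z => m.dist 1 z) '' {z : G | m'.dist 1 z ≤ M}) :=
      @bddAbove_image_of_isCompact G m'.toUniformSpace.toTopologicalSpace
        (fun z => m.dist 1 z) {z : G | m'.dist 1 z ≤ M} hK hc
    obtain ⟨B, hB⟩ := hKb
    filter_upwards [eventually_ge_atTop (max (B + 1) M)] with s hs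
    by_cases h : ((fun z => m'.dist 1 z) '' {z : G | s ≤ m.dist 1 z}).Nonempty
    · rw [dif_pos h]
      refine le_csInf h ?_
      rintro b ⟨z, hz, rfl⟩
      by_contra hlt
      push_neg at hlt
      have hzK : z ∈ {z : G | m'.dist 1 z ≤ M} := le_of_lt hlt
      have := hB ⟨z, hzK, rfl⟩
      have : m.dist 1 z ≤ B := this
      have hsz : s ≤ m.dist 1 z := hz
      have : max (B + 1) M ≤ B := le_trans hs (le_trans hsz this)
      linarith [le_max_left (B + 1) M]
    · rw [dif_neg h]
      exact le_trans (le_max_right (B + 1) M) hs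
  · -- Tendsto ρ₂
    refine tendsto_atTop_mono' atTop ?_ tendsto_id
    filter_upwards [eventually_ge_atTop (0:ℝ)] with r hr
    have h1 : (0:ℝ) ≤ S r := by
      refine le_csSup (hbddS r) ?_
      refine ⟨1, ?_, m'.dist_self 1⟩
      simpa [m.dist_self 1] using hr
    have h2 : r ≤ max r 0 := le_max_left r 0
    simp only [id]
    linarith
  · -- pointwise bounds
    intro x y
    constructor
    · set z := x⁻¹ * y with hz
      have hnon : ((fun w => m'.dist 1 w) '' {w : G | m.dist x y ≤ m.dist 1 w}).Nonempty :=
        ⟨m'.dist 1 z, z, le_of_eq (hred x y), rfl⟩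
      beta_reduce
      rw [dif_pos hnon]
      have hbdd : BddBelow ((fun w => m'.dist 1 w) '' {w : G | m.dist x y ≤ m.dist 1 w}) := by
        refine ⟨0, ?_⟩
        rintro b ⟨w, _, rfl⟩
        exact hd'0 1 w
      have : sInf ((fun w => m'.dist 1 w) '' {w : G | m.dist x y ≤ m.dist 1 w}) ≤ m'.dist 1 z :=
        csInf_le hbdd ⟨z, le_of_eq (hred x y), rfl⟩
      rw [hred' x y]
      exact this
    · set z := x⁻¹ * y with hz
      have hmem : m'.dist 1 z ∈ (fun w => m'.dist 1 w) '' {w : G | m.dist 1 w ≤ m.dist x y} :=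
        ⟨z, le_of_eq (hred x y).symm, rfl⟩
      have h1 : m'.dist 1 z ≤ S (m.dist x y) := le_csSup (hbddS _) hmem
      have h2 : (0:ℝ) ≤ max (m.dist x y) 0 := le_max_right _ _
      rw [hred' x y]
      linarith
end

section
/- Let Γ be a closed subgroup of a group G, let d be a proper left invariant metric on Γ and d' a proper left invariant metric on G, and suppose d and d' induce the same topology on Γ. Then the inclusion map (Γ,d) → (G,d') is a coarse embedding. -/
open Filter

/-- Let `Γ` be a closed subgroup of a group `G`, let `d` be a proper left
invariant metric on `Γ` and `d'` a proper left invariant metric on `G`, inducing the same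
topology on `Γ`. Then the inclusion `(Γ,d) → (G,d')` is a coarse embedding. -/
theorem inclusion_coarse_embedding {G : Type*} [Group G] (Γ : Subgroup G)
    (m : MetricSpace Γ) (m' : MetricSpace G)
    (hinv : ∀ g x y : Γ, m.dist (g * x) (g * y) = m.dist x y)
    (hinv' : ∀ g x y : G, m'.dist (g * x) (g * y) = m'.dist x y)
    (hproper : ∀ (x : Γ) (r : ℝ),
      @IsCompact Γ m.toUniformSpace.toTopologicalSpace {y : Γ | m.dist x y ≤ r})
    (hproper' : ∀ (x : G) (r : ℝ),
      @IsCompact G m'.toUniformSpace.toTopologicalSpace {y : G | m'.dist x y ≤ r})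
    (hclosed : @IsClosed G m'.toUniformSpace.toTopologicalSpace (Γ : Set G))
    (htop : m.toUniformSpace.toTopologicalSpace =
      TopologicalSpace.induced (Subtype.val : Γ → G) m'.toUniformSpace.toTopologicalSpace) :
    ∃ ρ₁ ρ₂ : ℝ → ℝ, Tendsto ρ₁ atTop atTop ∧ Tendsto ρ₂ atTop atTop ∧
      ∀ x y : Γ, ρ₁ (m.dist x y) ≤ m'.dist (x : G) (y : G) ∧
        m'.dist (x : G) (y : G) ≤ ρ₂ (m.dist x y) := by
  classical
  letI := m'
  letI := m
  letI : PseudoMetricSpace Γ := m.toPseudoMetricSpace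
  letI : UniformSpace Γ := m.toUniformSpace
  letI : TopologicalSpace Γ := m.toUniformSpace.toTopologicalSpace
  set f : Γ → ℝ := fun γ => m'.dist 1 (γ : G) with hf
  set g : Γ → ℝ := fun γ => m.dist 1 γ with hg
  have hval : Continuous (Subtype.val : Γ → G) :=
    continuous_iff_le_induced.mpr (le_of_eq htop)
  have hfc : Continuous f := (continuous_const.dist continuous_id).comp hval
  have hgc : Continuous g := continuous_const.dist continuous_id
  have hemb : Topology.IsEmbedding (Subtype.val : Γ → G) := ⟨⟨htop⟩, Subtype.val_injective⟩
  -- f-sublevel sets are compact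
  have hfcomp : ∀ R : ℝ, IsCompact {γ : Γ | f γ ≤ R} := by
    intro R
    rw [hemb.isCompact_iff]
    have himg : Subtype.val '' {γ : Γ | f γ ≤ R} =
        (Γ : Set G) ∩ {y : G | m'.dist 1 y ≤ R} := by
      ext y
      constructor
      · rintro ⟨γ, hγ, rfl⟩; exact ⟨γ.2, hγ⟩
      · rintro ⟨hy, hy2⟩; exact ⟨⟨y, hy⟩, hy2, rfl⟩
    rw [himg]
    refine (hproper' 1 R).of_isClosed_subset
      (hclosed.inter (isClosed_le ((continuous_const.dist continuous_id)) continuous_const))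
      fun y hy => hy.2
  -- g-sublevel sets are compact
  have hgcomp : ∀ r : ℝ, IsCompact {γ : Γ | g γ ≤ r} := fun r => hproper 1 r
  have hfnn : ∀ γ, 0 ≤ f γ := fun γ => dist_nonneg
  -- definitions of ρ₁ ρ₂
  set ρ₁ : ℝ → ℝ := fun r =>
    if h : {γ : Γ | r ≤ g γ}.Nonempty then sInf (f '' {γ : Γ | r ≤ g γ}) else r with hρ₁
  set ρ₂ : ℝ → ℝ := fun r => max r (sSup (f '' {γ : Γ | g γ ≤ r})) with hρ₂
  refine ⟨ρ₁, ρ₂, ?_, ?_, ?_⟩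
  · -- ρ₁ tendsto atTop
    rw [tendsto_atTop_atTop]
    intro R
    obtain ⟨B, hB⟩ : BddAbove (g '' {γ : Γ | f γ ≤ R}) :=
      (hfcomp R).bddAbove_image hgc.continuousOn
    refine ⟨max R (B + 1), fun r hr => ?_⟩
    have hrR : R ≤ r := le_trans (le_max_left _ _) hr
    have hrB : B + 1 ≤ r := le_trans (le_max_right _ _) hr
    simp only [hρ₁]
    split_ifs with h
    · refine le_csInf (h.image f) ?_
      rintro b ⟨γ, hγ, rfl⟩
      by_contra hb
      push_neg at hb
      have : g γ ≤ B := hB ⟨γ, le_of_lt hb, rfl⟩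
      have : g γ < r := lt_of_le_of_lt this (by linarith)
      exact absurd hγ (not_le.mpr this)
    · exact hrR
  · -- ρ₂ tendsto atTop
    exact tendsto_atTop_mono (fun r => le_max_left _ _) tendsto_id
  · intro x y
    have hd : m.dist x y = g (x⁻¹ * y) := by
      rw [hg]; simp only []
      rw [← hinv x⁻¹ x y, inv_mul_cancel]
    have hd' : m'.dist (x : G) (y : G) = f (x⁻¹ * y) := by
      rw [hf]; simp only []
      rw [← hinv' (x : G)⁻¹ x y, inv_mul_cancel]
      push_cast
      rfl
    set γ := x⁻¹ * y
    rw [hd, hd']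
    constructor
    · -- lower bound
      have hne : {γ' : Γ | g γ ≤ g γ'}.Nonempty := ⟨γ, show g γ ≤ g γ from le_rfl⟩
      simp only [hρ₁]
      rw [dif_pos hne]
      exact csInf_le ⟨0, fun b ⟨γ', _, hb⟩ => hb ▸ hfnn γ'⟩ ⟨γ, show g γ ≤ g γ from le_rfl, rfl⟩
    · -- upper bound
      refine le_trans ?_ (le_max_right _ _)
      exact le_csSup ((hgcomp (g γ)).bddAbove_image hfc.continuousOn) ⟨γ, show g γ ≤ g γ from le_rfl, rfl⟩
end

section
/- Let Γ be a countable group, let S be a symmetric generating set of Γ (S = S⁻¹), and let w : S → (0,∞) be a weight function, i.e. a proper positive function with w(s⁻¹) = w(s) for all s ∈ S. Then the function ‖x‖_w = inf { Σ_{i=1}^{n} w(s_i) : x = s₁s₂⋯sₙ, s_i ∈ S } (with ‖e‖_w = 0) is a proper norm on Γ; moreover the infimum is attained as a minimum for every x ∈ Γ. -/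
/-- Let `Γ` be a countable group, `S` a symmetric generating set, and
`w` a weight function on `S` (positive, proper, and symmetric). Then
`‖x‖_w = inf { Σ w(sᵢ) : x = s₁⋯sₙ, sᵢ ∈ S }` is a proper norm on `Γ`, and the infimum
is attained as a minimum for every `x`. -/
theorem weight_function_defines_proper_norm {Γ : Type*} [Group Γ] [Countable Γ]
    (S : Set Γ) (hSsymm : ∀ s ∈ S, s⁻¹ ∈ S) (hSgen : Subgroup.closure S = ⊤)
    (w : Γ → ℝ) (hw_pos : ∀ s ∈ S, 0 < w s) (hw_symm : ∀ s ∈ S, w s⁻¹ = w s)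
    (hw_proper : ∀ C : ℝ, {s | s ∈ S ∧ w s ≤ C}.Finite)
    (ν : Γ → ℝ)
    (hν : ∀ x : Γ, ν x = sInf {c : ℝ |
      ∃ l : List Γ, (∀ s ∈ l, s ∈ S) ∧ l.prod = x ∧ c = (l.map w).sum}) :
    (∀ x : Γ, 0 ≤ ν x) ∧
    (∀ x : Γ, ν x = 0 ↔ x = 1) ∧
    (∀ x : Γ, ν x⁻¹ = ν x) ∧
    (∀ x y : Γ, ν (x * y) ≤ ν x + ν y) ∧
    (∀ r : ℝ, {x : Γ | ν x ≤ r}.Finite) ∧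
    (∀ x : Γ, ∃ l : List Γ, (∀ s ∈ l, s ∈ S) ∧ l.prod = x ∧ ν x = (l.map w).sum) := by
  classical
  set A : Γ → Set ℝ := fun x => {c : ℝ |
      ∃ l : List Γ, (∀ s ∈ l, s ∈ S) ∧ l.prod = x ∧ c = (l.map w).sum} with hAdef
  -- sums of weights are nonneg, and each entry weight is at most the sum
  have hmap_nonneg : ∀ (l : List Γ), (∀ s ∈ l, s ∈ S) → ∀ y ∈ l.map w, (0:ℝ) ≤ y := by
    intro l hl y hy
    obtain ⟨t, ht, rfl⟩ := List.mem_map.mp hy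
    exact (hw_pos t (hl t ht)).le
  have hsum_nonneg : ∀ (l : List Γ), (∀ s ∈ l, s ∈ S) → (0:ℝ) ≤ (l.map w).sum :=
    fun l hl => List.sum_nonneg (hmap_nonneg l hl)
  have hentry_le : ∀ (l : List Γ), (∀ s ∈ l, s ∈ S) → ∀ s ∈ l, w s ≤ (l.map w).sum := by
    intro l hl s hs
    exact List.single_le_sum (hmap_nonneg l hl) _ (List.mem_map_of_mem (f := w) hs)
  have hnonneg_mem : ∀ x c, c ∈ A x → (0:ℝ) ≤ c := by
    rintro x c ⟨l, hl, -, rfl⟩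
    exact hsum_nonneg l hl
  have hbdd : ∀ x, BddBelow (A x) := fun x => ⟨0, fun c hc => hnonneg_mem x c hc⟩
  -- A x is nonempty
  have hexists : ∀ x : Γ, ∃ l : List Γ, (∀ s ∈ l, s ∈ S) ∧ l.prod = x := by
    intro x
    have hx : x ∈ Subgroup.closure S := by rw [hSgen]; trivial
    induction hx using Subgroup.closure_induction with
    | mem s hs => exact ⟨[s], by simpa using hs⟩
    | one => exact ⟨[], by simp⟩
    | mul a b ha hb iha ihb =>
      obtain ⟨l1, h1, p1⟩ := iha
      obtain ⟨l2, h2, p2⟩ := ihb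
      refine ⟨l1 ++ l2, ?_, by simp [p1, p2]⟩
      intro s hs
      rcases List.mem_append.mp hs with h | h
      · exact h1 s h
      · exact h2 s h
    | inv a ha iha =>
      obtain ⟨l, hl, pl⟩ := iha
      refine ⟨(l.map fun y => y⁻¹).reverse, ?_, ?_⟩
      · intro s hs
        rw [List.mem_reverse, List.mem_map] at hs
        obtain ⟨t, ht, rfl⟩ := hs
        exact hSsymm t (hl t ht)
      · rw [← List.prod_inv_reverse, pl]
  have hne : ∀ x : Γ, (A x).Nonempty := by
    intro x
    obtain ⟨l, hl, pl⟩ := hexists x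
    exact ⟨(l.map w).sum, l, hl, pl, rfl⟩
  -- the set of lists with bounded sum is finite
  have hLfin : ∀ C : ℝ, {l : List Γ | (∀ s ∈ l, s ∈ S) ∧ (l.map w).sum ≤ C}.Finite := by
    intro C
    have hFfin : {s | s ∈ S ∧ w s ≤ C}.Finite := hw_proper C
    set F := {s | s ∈ S ∧ w s ≤ C} with hF
    rcases F.eq_empty_or_nonempty with hFe | hFne
    · refine Set.Finite.subset (Set.finite_singleton ([] : List Γ)) ?_
      rintro l ⟨hl, hsum⟩
      cases l with
      | nil => rfl
      | cons a t =>
        exfalso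
        have haS := hl a (by simp)
        have haF : a ∈ F := ⟨haS, le_trans (hentry_le _ hl a (by simp)) hsum⟩
        rw [hFe] at haF; exact haF
    · obtain ⟨s₀, hs₀, hmin⟩ := Set.exists_min_image F w hFfin hFne
      set ε := w s₀ with hε
      have hεpos : 0 < ε := hw_pos s₀ hs₀.1
      set N := ⌈C / ε⌉₊ with hN
      haveI : Finite F := hFfin
      have key : {l : List Γ | (∀ s ∈ l, s ∈ S) ∧ (l.map w).sum ≤ C} ⊆
          (fun l : List F => (l.map Subtype.val)) '' {l : List F | l.length ≤ N} := by
        rintro l ⟨hl, hsum⟩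
        have hmem : ∀ s ∈ l, s ∈ F :=
          fun s hs => ⟨hl s hs, le_trans (hentry_le l hl s hs) hsum⟩
        refine ⟨l.attach.map (fun s => ⟨s.1, hmem s.1 s.2⟩), ?_, ?_⟩
        · have hlen : (l.length : ℝ) * ε ≤ C := by
            calc (l.length : ℝ) * ε = l.length • ε := by
                  rw [nsmul_eq_mul]
              _ ≤ (l.map w).sum := by
                  have := List.card_nsmul_le_sum (l.map w) ε (fun x hx => by
                    obtain ⟨t, ht, rfl⟩ := List.mem_map.mp hx
                    exact hmin t (hmem t ht))
                  simpa using this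
              _ ≤ C := hsum
          have : (l.length : ℝ) ≤ C / ε := (le_div_iff₀ hεpos).mpr hlen
          have hln : l.length ≤ N := by
            have h2 : (l.length : ℝ) ≤ (N : ℝ) := this.trans (Nat.le_ceil _)
            exact_mod_cast h2
          simpa using hln
        · simp
      refine Set.Finite.subset (Set.Finite.image _ (List.finite_length_le F N)) key
  -- the infimum is attained
  have hmin : ∀ x : Γ, ∃ l : List Γ, (∀ s ∈ l, s ∈ S) ∧ l.prod = x ∧ ν x = (l.map w).sum := by
    intro x
    obtain ⟨c₀, hc₀⟩ := hne x
    have hBfin : (A x ∩ Set.Iic c₀).Finite := by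
      refine Set.Finite.subset (Set.Finite.image (fun l => (l.map w).sum) (hLfin c₀)) ?_
      rintro c ⟨⟨l, hl, hp, rfl⟩, hc⟩
      exact ⟨l, ⟨hl, hc⟩, rfl⟩
    have hBne : (A x ∩ Set.Iic c₀).Nonempty := ⟨c₀, hc₀, Set.mem_Iic.mpr le_rfl⟩
    obtain ⟨b, hb, hble⟩ := Set.exists_min_image _ id hBfin hBne
    have hbA : b ∈ A x := hb.1
    have heq : ν x = b := by
      rw [hν x]
      refine le_antisymm (csInf_le (hbdd x) hbA) ?_
      refine le_csInf (hne x) ?_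
      intro c hc
      rcases le_or_gt c c₀ with h | h
      · exact hble c ⟨hc, h⟩
      · exact le_trans (hble c₀ ⟨hc₀, Set.mem_Iic.mpr le_rfl⟩) h.le
    obtain ⟨l, hl, hp, hc⟩ := hbA
    exact ⟨l, hl, hp, heq.trans hc⟩
  have hle : ∀ (x : Γ) (l : List Γ), (∀ s ∈ l, s ∈ S) → l.prod = x → ν x ≤ (l.map w).sum := by
    intro x l hl hp
    rw [hν x]
    exact csInf_le (hbdd x) ⟨l, hl, hp, rfl⟩
  have hnonneg : ∀ x : Γ, 0 ≤ ν x := by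
    intro x
    obtain ⟨l, hl, -, hc⟩ := hmin x
    rw [hc]; exact hsum_nonneg l hl
  refine ⟨hnonneg, ?_, ?_, ?_, ?_, hmin⟩
  · -- norm zero iff identity
    intro x
    constructor
    · intro h0
      obtain ⟨l, hl, hp, hc⟩ := hmin x
      cases l with
      | nil => simpa using hp.symm
      | cons a t =>
        exfalso
        have h1 : w a ≤ ((a :: t).map w).sum := hentry_le _ hl a (by simp)
        rw [← hc, h0] at h1
        exact absurd h1 (not_le.mpr (hw_pos a (hl a (by simp))))
    · rintro rfl
      refine le_antisymm ?_ (hnonneg 1)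
      have := hle 1 [] (by simp) (by simp)
      simpa using this
  · -- symmetry
    have haux : ∀ x : Γ, ν x⁻¹ ≤ ν x := by
      intro x
      obtain ⟨l, hl, hp, hc⟩ := hmin x
      have hl' : ∀ s ∈ (l.map fun y => y⁻¹).reverse, s ∈ S := by
        intro s hs
        rw [List.mem_reverse, List.mem_map] at hs
        obtain ⟨t, ht, rfl⟩ := hs
        exact hSsymm t (hl t ht)
      have hp' : ((l.map fun y => y⁻¹).reverse).prod = x⁻¹ := by
        rw [← List.prod_inv_reverse, hp]
      have := hle x⁻¹ _ hl' hp'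
      refine le_trans this ?_
      rw [hc]
      rw [List.map_reverse, List.sum_reverse, List.map_map]
      apply le_of_eq
      congr 1
      apply List.map_congr_left
      intro a ha
      exact hw_symm a (hl a ha)
    intro x
    exact le_antisymm (haux x) (by simpa using haux x⁻¹)
  · -- triangle inequality
    intro x y
    obtain ⟨lx, hlx, hpx, hcx⟩ := hmin x
    obtain ⟨ly, hly, hpy, hcy⟩ := hmin y
    have hl : ∀ s ∈ lx ++ ly, s ∈ S := by
      intro s hs
      rcases List.mem_append.mp hs with h | h
      · exact hlx s h
      · exact hly s h
    have := hle (x * y) (lx ++ ly) hl (by simp [hpx, hpy])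
    refine le_trans this ?_
    rw [hcx, hcy, List.map_append, List.sum_append]
  · -- properness
    intro r
    refine Set.Finite.subset (Set.Finite.image List.prod (hLfin r)) ?_
    intro x hx
    obtain ⟨l, hl, hp, hc⟩ := hmin x
    exact ⟨l, ⟨hl, hc ▸ hx⟩, hp⟩
end

section
/- Let G be a countable group equipped with a proper left invariant metric d. Then asdim(G,d) = sup_F asdim(F, d|_F), where the supremum is taken over all finitely generated subgroups F of G, each equipped with the restriction of the metric d. -/
/-- A family `𝒰` of subsets of a metric space is `d`-disjoint if any two points lying in
distinct members of `𝒰` are at distance greater than `d`. -/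
def DDisjoint {X : Type*} [MetricSpace X] (d : ℝ) (𝒰 : Set (Set X)) : Prop :=
  ∀ U ∈ 𝒰, ∀ V ∈ 𝒰, U ≠ V → ∀ x ∈ U, ∀ y ∈ V, d < dist x y

/-- A family `𝒰` of subsets of a metric space is `R`-bounded if every member has
diameter at most `R`. -/
def RBounded {X : Type*} [MetricSpace X] (R : ℝ) (𝒰 : Set (Set X)) : Prop :=
  ∀ U ∈ 𝒰, ∀ x ∈ U, ∀ y ∈ U, dist x y ≤ R

/-- `AsdimLE X n` : the metric space `X` has asymptotic dimension at most `n`, i.e. for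
every `d > 0` there are `R > 0` and `n+1` families of subsets of `X`, each `R`-bounded and
`d`-disjoint, whose union covers `X`. -/
def AsdimLE (X : Type*) [MetricSpace X] (n : ℕ) : Prop :=
  ∀ d : ℝ, 0 < d → ∃ R : ℝ, 0 < R ∧ ∃ 𝒰 : Fin (n + 1) → Set (Set X),
    (∀ i, RBounded R (𝒰 i)) ∧ (∀ i, DDisjoint d (𝒰 i)) ∧ (⋃ i, ⋃₀ 𝒰 i) = Set.univ

/-- The asymptotic dimension of a metric space, as an element of `ℕ∞`: the least `n` such
that `AsdimLE X n` holds, or `⊤` if there is no such `n`. -/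
noncomputable def asdim (X : Type*) [MetricSpace X] : ℕ∞ :=
  sInf {m : ℕ∞ | ∃ n : ℕ, m = (n : ℕ∞) ∧ AsdimLE X n}


lemma AsdimLE.mono {X : Type*} [MetricSpace X] {n m : ℕ} (h : AsdimLE X n) (hnm : n ≤ m) :
    AsdimLE X m := by
  intro d hd
  obtain ⟨R, hR, 𝒰, hb, hdis, hcov⟩ := h d hd
  refine ⟨R, hR, fun i => if h : (i : ℕ) < n + 1 then 𝒰 ⟨i, h⟩ else ∅, ?_, ?_, ?_⟩
  · intro i
    dsimp only
    split
    · exact hb _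
    · intro U hU; exact absurd hU (Set.notMem_empty U)
  · intro i
    dsimp only
    split
    · exact hdis _
    · intro U hU; exact absurd hU (Set.notMem_empty U)
  · apply Set.eq_univ_of_univ_subset
    rw [← hcov]
    intro x hx
    obtain ⟨i, U, hU, hxU⟩ := by
      simpa only [Set.mem_iUnion, Set.mem_sUnion] using hx
    refine Set.mem_iUnion.2 ⟨⟨(i : ℕ), by omega⟩, ?_⟩
    refine Set.mem_sUnion.2 ⟨U, ?_, hxU⟩
    dsimp only
    rw [dif_pos i.isLt]
    exact hU

lemma AsdimLE.subtype {X : Type*} [MetricSpace X] {n : ℕ} (h : AsdimLE X n) (p : X → Prop) :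
    AsdimLE (Subtype p) n := by
  intro d hd
  obtain ⟨R, hR, 𝒰, hb, hdis, hcov⟩ := h d hd
  refine ⟨R, hR, fun i => (fun U => Subtype.val ⁻¹' U) '' 𝒰 i, ?_, ?_, ?_⟩
  · rintro i U ⟨U', hU', rfl⟩ x hx y hy
    rw [Subtype.dist_eq]
    exact hb i U' hU' _ hx _ hy
  · rintro i U ⟨U', hU', rfl⟩ V ⟨V', hV', rfl⟩ hne x hx y hy
    rw [Subtype.dist_eq]
    exact hdis i U' hU' V' hV' (fun e => hne (by rw [e])) _ hx _ hy
  · apply Set.eq_univ_of_forall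
    intro x
    have hx : (x : X) ∈ ⋃ i, ⋃₀ 𝒰 i := hcov ▸ Set.mem_univ _
    obtain ⟨i, U, hU, hxU⟩ := by
      simpa only [Set.mem_iUnion, Set.mem_sUnion] using hx
    exact Set.mem_iUnion.2 ⟨i, Set.mem_sUnion.2 ⟨Subtype.val ⁻¹' U, ⟨U, hU, rfl⟩, hxU⟩⟩

lemma asdim_le_iff {X : Type*} [MetricSpace X] {n : ℕ} :
    asdim X ≤ (n : ℕ∞) ↔ AsdimLE X n := by
  constructor
  · intro h
    by_contra hn
    have h1 : ((n : ℕ∞) + 1) ≤ asdim X := by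
      apply le_sInf
      rintro m ⟨k, rfl, hk⟩
      have hlt : n < k := by
        by_contra hkn
        exact hn (hk.mono (le_of_not_gt hkn))
      exact_mod_cast Nat.succ_le_of_lt hlt
    have h2 := h1.trans h
    rw [← Nat.cast_one, ← Nat.cast_add, Nat.cast_le] at h2
    omega
  · intro h
    exact sInf_le ⟨n, rfl, h⟩

lemma asdimLE_of_fg_subgroups {G : Type*} [Group G] [MetricSpace G]
    (hinv : ∀ g x y : G, dist (g * x) (g * y) = dist x y)
    (hproper : ∀ (x : G) (r : ℝ), {y : G | dist x y ≤ r}.Finite)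
    {n : ℕ} (h : ∀ F : Subgroup G, F.FG → AsdimLE F n) : AsdimLE G n := by
  intro d hd
  set S : Set G := {g | dist 1 g ≤ d} with hS
  have hSfin : S.Finite := hproper 1 d
  set F : Subgroup G := Subgroup.closure S with hF
  have hFG : F.FG := (Subgroup.fg_iff _).2 ⟨S, rfl, hSfin⟩
  have key : ∀ x y : G, dist x y ≤ d → x⁻¹ * y ∈ F := by
    intro x y hxy
    apply Subgroup.subset_closure
    show dist 1 (x⁻¹ * y) ≤ d
    have h2 := hinv x 1 (x⁻¹ * y)
    rw [mul_one, mul_inv_cancel_left] at h2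
    rw [← h2]; exact hxy
  obtain ⟨R, hR, 𝒱, hbV, hdV, hcovV⟩ := h F hFG d hd
  set emb : G ⧸ F → Set F → Set G := fun c V => (fun v : F => c.out * (v : G)) '' V with hemb
  have embinj : ∀ c : G ⧸ F, Function.Injective (fun v : F => c.out * (v : G)) := by
    intro c v w hvw
    exact Subtype.val_injective (mul_left_cancel hvw)
  refine ⟨R, hR, fun i => ⋃ c : G ⧸ F, emb c '' 𝒱 i, ?_, ?_, ?_⟩
  · rintro i U hU x hx y hy
    obtain ⟨c, V, hV, rfl⟩ : ∃ c V, V ∈ 𝒱 i ∧ emb c V = U := by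
      simpa only [Set.mem_iUnion, Set.mem_image] using hU
    obtain ⟨v, hv, rfl⟩ := hx
    obtain ⟨w, hw, rfl⟩ := hy
    rw [hinv]
    rw [← Subtype.dist_eq]
    exact hbV i V hV v hv w hw
  · rintro i U hU W hW hne x hx y hy
    obtain ⟨c1, V1, hV1, rfl⟩ : ∃ c V, V ∈ 𝒱 i ∧ emb c V = U := by
      simpa only [Set.mem_iUnion, Set.mem_image] using hU
    obtain ⟨c2, V2, hV2, rfl⟩ : ∃ c V, V ∈ 𝒱 i ∧ emb c V = W := by
      simpa only [Set.mem_iUnion, Set.mem_image] using hW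
    obtain ⟨v1, hv1, rfl⟩ := hx
    obtain ⟨v2, hv2, rfl⟩ := hy
    by_contra hle
    push_neg at hle
    have hmem : (c1.out * (v1 : G))⁻¹ * (c2.out * (v2 : G)) ∈ F := key _ _ hle
    have hcc : c1.out⁻¹ * c2.out ∈ F := by
      have heq : c1.out⁻¹ * c2.out =
          (v1 : G) * ((c1.out * (v1 : G))⁻¹ * (c2.out * (v2 : G))) * (v2 : G)⁻¹ := by
        group
      rw [heq]
      exact F.mul_mem (F.mul_mem v1.2 hmem) (F.inv_mem v2.2)
    have hc : c1 = c2 := by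
      have := (QuotientGroup.eq (s := F)).2 hcc
      rwa [QuotientGroup.out_eq', QuotientGroup.out_eq'] at this
    subst hc
    have hVne : V1 ≠ V2 := by
      intro e
      exact hne (by rw [e])
    have := hdV i V1 hV1 V2 hV2 hVne v1 hv1 v2 hv2
    rw [Subtype.dist_eq, ← hinv c1.out] at this
    exact absurd hle (not_le.2 this)
  · apply Set.eq_univ_of_forall
    intro x
    set c : G ⧸ F := QuotientGroup.mk x with hc
    have hmem : c.out⁻¹ * x ∈ F := by
      have : (c.out : G ⧸ F) = (x : G ⧸ F) := by rw [QuotientGroup.out_eq']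
      exact (QuotientGroup.eq (s := F)).1 this
    set v : F := ⟨c.out⁻¹ * x, hmem⟩ with hv
    have hvcov : (v : F) ∈ ⋃ i, ⋃₀ 𝒱 i := hcovV ▸ Set.mem_univ _
    obtain ⟨i, V, hV, hvV⟩ := by
      simpa only [Set.mem_iUnion, Set.mem_sUnion] using hvcov
    refine Set.mem_iUnion.2 ⟨i, Set.mem_sUnion.2 ⟨emb c V, Set.mem_iUnion.2 ⟨c, V, hV, rfl⟩, ?_⟩⟩
    exact ⟨v, hvV, by simp [hv, mul_inv_cancel_left]⟩

/-- For a countable group `G` equipped with a proper left invariant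
metric, the asymptotic dimension of `G` is the supremum of the asymptotic dimensions of
its finitely generated subgroups (each with the restricted metric). -/
theorem asdim_eq_iSup_finitelyGenerated_subgroups {G : Type*} [Group G] [Countable G]
    [MetricSpace G]
    (hinv : ∀ g x y : G, dist (g * x) (g * y) = dist x y)
    (hproper : ∀ (x : G) (r : ℝ), {y : G | dist x y ≤ r}.Finite) :
    asdim G = ⨆ F : {F : Subgroup G // F.FG}, asdim F.val := by
  apply le_antisymm
  · set s := ⨆ F : {F : Subgroup G // F.FG}, asdim F.val with hs
    rcases eq_or_ne s ⊤ with htop | htop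
    · rw [htop]; exact le_top
    · lift s to ℕ using htop with n hn
      rw [asdim_le_iff]
      apply asdimLE_of_fg_subgroups hinv hproper
      intro F hF
      rw [← asdim_le_iff]
      exact hn ▸ le_iSup (fun F : {F : Subgroup G // F.FG} => asdim F.val) ⟨F, hF⟩
  · apply iSup_le
    intro F
    apply sInf_le_sInf
    rintro m ⟨n, rfl, h⟩
    exact ⟨n, rfl, h.subtype (· ∈ F.val)⟩
end

section
/- Let T be a countable torsion abelian group equipped with a proper left invariant metric. Then asdim T = 0. -/
/-- Every countable torsion abelian group, equipped with a proper left
invariant metric, has asymptotic dimension `0`. -/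
theorem asdim_torsion_abelian_eq_zero {T : Type*} [AddCommGroup T] [Countable T]
    [MetricSpace T]
    (hinv : ∀ g x y : T, dist (g + x) (g + y) = dist x y)
    (hproper : ∀ (x : T) (r : ℝ), {y : T | dist x y ≤ r}.Finite)
    (htorsion : ∀ t : T, IsOfFinAddOrder t) :
    asdim T = 0 := by
  have hle : AsdimLE T 0 := by
    intro d hd
    -- translation invariance rewritten
    have hdist : ∀ x y : T, dist x y = dist 0 (y - x) := by
      intro x y
      have := hinv (-x) x y
      simpa [sub_eq_neg_add] using this.symm
    set B : Set T := {y : T | dist 0 y ≤ d} with hBdef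
    have hB : B.Finite := hproper 0 d
    haveI : Finite ↥B := hB.to_subtype
    set H : AddSubgroup T := AddSubgroup.closure B with hHdef
    haveI : AddGroup.FG ↥H := AddGroup.closure_finite_fg B
    haveI : Finite ↥H := AddCommGroup.finite_of_fg_torsion ↥H (by
      intro x
      obtain ⟨n, hn, hx⟩ := (isOfFinAddOrder_iff_nsmul_eq_zero).1 (htorsion (x : T))
      exact (isOfFinAddOrder_iff_nsmul_eq_zero).2 ⟨n, hn, Subtype.ext (by
        push_cast
        exact hx)⟩)
    have hHfin : (H : Set T).Finite := Set.toFinite _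
    -- bound on distances within H
    have himg : ((fun h => dist (0 : T) h) '' (H : Set T)).Finite := hHfin.image _
    obtain ⟨r, hr⟩ := himg.bddAbove
    refine ⟨max r 1, lt_of_lt_of_le one_pos (le_max_right _ _), ?_⟩
    set C : T → Set T := fun a => {z : T | z - a ∈ H} with hCdef
    have hCeq : ∀ a b : T, b - a ∈ H → C a = C b := by
      intro a b hab
      ext z
      constructor
      · intro hz
        have : (z - a) - (b - a) ∈ H := H.sub_mem hz hab
        exact (show z - b ∈ H by simpa [sub_sub_sub_cancel_right] using this)
      · intro hz
        have : (z - b) + (b - a) ∈ H := H.add_mem hz hab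
        exact (show z - a ∈ H by simpa [sub_add_sub_cancel] using this)
    refine ⟨fun _ => Set.range C, ?_, ?_, ?_⟩
    · intro i U hU x hx y hy
      obtain ⟨a, rfl⟩ := hU
      have hxy : y - x ∈ H := by
        have := H.sub_mem hy hx
        simpa [sub_sub_sub_cancel_right] using this
      have : dist x y ≤ r := by
        rw [hdist x y]
        exact hr ⟨y - x, hxy, rfl⟩
      exact this.trans (le_max_left _ _)
    · intro i U hU V hV hUV x hx y hy
      obtain ⟨a, rfl⟩ := hU
      obtain ⟨b, rfl⟩ := hV
      by_contra hcon
      push_neg at hcon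
      have hyx : y - x ∈ H := by
        apply AddSubgroup.subset_closure
        show dist 0 (y - x) ≤ d
        rw [← hdist]
        exact hcon
      apply hUV
      apply hCeq
      -- b - a ∈ H
      have h1 : x - a ∈ H := hx
      have h2 : y - b ∈ H := hy
      have : (x - a) + (y - x) - (y - b) ∈ H := H.sub_mem (H.add_mem h1 hyx) h2
      have heq : (x - a) + (y - x) - (y - b) = b - a := by abel
      rwa [heq] at this
    · ext x
      simp only [Set.mem_iUnion, Set.mem_sUnion, Set.mem_univ, iff_true]
      exact ⟨0, ⟨C x, ⟨x, rfl⟩, by show x - x ∈ H; simpa using H.zero_mem⟩⟩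
  have h0 : (0 : ℕ∞) ∈ {m : ℕ∞ | ∃ n : ℕ, m = (n : ℕ∞) ∧ AsdimLE T n} := ⟨0, rfl, hle⟩
  exact le_antisymm (sInf_le h0) zero_le
end

section
/- Let ℚ denote the additive group of rational numbers equipped with any proper left invariant metric. Then asdim ℚ = 1. -/
lemma aux_rat_mul_nat_int (q : ℚ) (n : ℕ) (h : q.den ∣ n) : ∃ k : ℤ, q * (n : ℚ) = (k : ℚ) := by
  obtain ⟨m, rfl⟩ := h
  refine ⟨q.num * m, ?_⟩
  push_cast
  rw [← mul_assoc, Rat.mul_den_eq_num]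

/-- A family `𝒰` of subsets is `d`-disjoint with respect to a distance function `ρ`. -/
def DDisjointWith {X : Type*} (ρ : X → X → ℝ) (d : ℝ) (𝒰 : Set (Set X)) : Prop :=
  ∀ U ∈ 𝒰, ∀ V ∈ 𝒰, U ≠ V → ∀ x ∈ U, ∀ y ∈ V, d < ρ x y

/-- A family `𝒰` of subsets is `R`-bounded with respect to a distance function `ρ`. -/
def RBoundedWith {X : Type*} (ρ : X → X → ℝ) (R : ℝ) (𝒰 : Set (Set X)) : Prop :=
  ∀ U ∈ 𝒰, ∀ x ∈ U, ∀ y ∈ U, ρ x y ≤ R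

/-- `AsdimLEWith ρ n` : the space `X` with distance function `ρ` has asymptotic dimension
at most `n`. -/
def AsdimLEWith {X : Type*} (ρ : X → X → ℝ) (n : ℕ) : Prop :=
  ∀ d : ℝ, 0 < d → ∃ R : ℝ, 0 < R ∧ ∃ 𝒰 : Fin (n + 1) → Set (Set X),
    (∀ i, RBoundedWith ρ R (𝒰 i)) ∧ (∀ i, DDisjointWith ρ d (𝒰 i)) ∧
    (⋃ i, ⋃₀ 𝒰 i) = Set.univ

/-- The asymptotic dimension (in `ℕ∞`) of a space with distance function `ρ`. -/
noncomputable def asdimWith {X : Type*} (ρ : X → X → ℝ) : ℕ∞ :=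
  sInf {m : ℕ∞ | ∃ n : ℕ, m = (n : ℕ∞) ∧ AsdimLEWith ρ n}

/-- The additive group `ℚ` of rational numbers, equipped with any proper
left invariant metric `ρ`, has asymptotic dimension `1`. -/
theorem asdim_rat_eq_one (ρ : ℚ → ℚ → ℝ)
    (h_eq_zero : ∀ x y : ℚ, ρ x y = 0 ↔ x = y)
    (h_symm : ∀ x y : ℚ, ρ x y = ρ y x)
    (h_triangle : ∀ x y z : ℚ, ρ x z ≤ ρ x y + ρ y z)
    (hinv : ∀ g x y : ℚ, ρ (g + x) (g + y) = ρ x y)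
    (hproper : ∀ (x : ℚ) (r : ℝ), {y : ℚ | ρ x y ≤ r}.Finite) :
    asdimWith ρ = 1 := by
  have hrefl : ∀ x : ℚ, ρ x x = 0 := fun x => (h_eq_zero x x).mpr rfl
  have hnonneg : ∀ x y : ℚ, 0 ≤ ρ x y := by
    intro x y
    have h1 := h_triangle x y x
    rw [hrefl x, h_symm y x] at h1
    linarith
  have hdiff : ∀ x y : ℚ, ρ x y = ρ 0 (y - x) := by
    intro x y
    have := hinv x 0 (y - x)
    simpa using this
  -- lower bound: not asdim ≤ 0
  have h0 : ¬ AsdimLEWith ρ 0 := by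
    intro h
    have hd : 0 < ρ 0 1 := by
      rcases lt_or_eq_of_le (hnonneg 0 1) with h' | h'
      · exact h'
      · exact absurd ((h_eq_zero 0 1).mp h'.symm) (by norm_num)
    obtain ⟨R, hR, 𝒰, hbdd, hdisj, hcov⟩ := h (ρ 0 1) hd
    have hmem : ∀ q : ℚ, ∃ V ∈ 𝒰 0, q ∈ V := by
      intro q
      have hq : q ∈ ⋃ i, ⋃₀ 𝒰 i := by rw [hcov]; trivial
      obtain ⟨i, hi⟩ := Set.mem_iUnion.mp hq
      obtain ⟨V, hV, hqV⟩ := hi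
      exact ⟨V, by rwa [Subsingleton.elim (0 : Fin 1) i], hqV⟩
    obtain ⟨V0, hV0, h0V⟩ := hmem 0
    have hnat : ∀ n : ℕ, (n : ℚ) ∈ V0 := by
      intro n
      induction n with
      | zero => simpa using h0V
      | succ n ih =>
        obtain ⟨W, hW, hnW⟩ := hmem ((n : ℚ) + 1)
        by_cases he : W = V0
        · subst he; push_cast; exact hnW
        · exfalso
          have hlt := hdisj 0 V0 hV0 W hW (Ne.symm he) (n : ℚ) ih ((n : ℚ) + 1) hnW
          have heq : ρ (n : ℚ) ((n : ℚ) + 1) = ρ 0 1 := by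
            have := hinv (n : ℚ) 0 1
            simpa using this
          rw [heq] at hlt
          exact lt_irrefl _ hlt
    have hfin : V0.Finite :=
      (hproper 0 R).subset (fun y hy => hbdd 0 V0 hV0 0 h0V y hy)
    exact Set.infinite_of_injective_forall_mem
      (f := fun n : ℕ => (n : ℚ)) Nat.cast_injective hnat hfin
  -- upper bound: asdim ≤ 1
  have h1 : AsdimLEWith ρ 1 := by
    intro d hd
    have hfin := hproper 0 d
    set F : Finset ℚ := hfin.toFinset with hF
    have hmemF : ∀ z : ℚ, z ∈ F ↔ ρ 0 z ≤ d := by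
      intro z; rw [hF, Set.Finite.mem_toFinset]; rfl
    have h0F : (0 : ℚ) ∈ F := by rw [hmemF]; rw [hrefl]; exact hd.le
    set N : ℕ := F.prod (fun z => z.den) with hN
    have hNpos : 0 < N := Finset.prod_pos (fun z _ => z.pos)
    have hNQpos : (0 : ℚ) < N := by exact_mod_cast hNpos
    have hNz : ∀ z ∈ F, ∃ k : ℤ, z * N = (k : ℚ) := fun z hz =>
      aux_rat_mul_nat_int z N (Finset.dvd_prod_of_mem _ hz)
    obtain ⟨L, hLgt⟩ := exists_nat_gt (max 1 (F.sup' ⟨0, h0F⟩ (fun z => |z| * N)))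
    have hL1 : (1 : ℚ) ≤ L := le_of_lt (lt_of_le_of_lt (le_max_left _ _) hLgt)
    have hLpos : (0 : ℚ) < L := lt_of_lt_of_le one_pos hL1
    have hLz : ∀ z ∈ F, |z| * N < L := fun z hz =>
      lt_of_le_of_lt (le_trans (Finset.le_sup' (fun z => |z| * (N : ℚ)) hz) (le_max_right _ _)) hLgt
    set b : ℚ → ℤ := fun x => ⌊x * N / L⌋ with hb
    have hfloor : ∀ y : ℚ, (b y : ℚ) * L ≤ y * N ∧ y * N < ((b y : ℚ) + 1) * L := by
      intro y
      constructor
      · have := Int.floor_le (y * N / L)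
        calc (b y : ℚ) * L ≤ (y * N / L) * L := by
              apply mul_le_mul_of_nonneg_right this hLpos.le
          _ = y * N := by field_simp
      · have := Int.lt_floor_add_one (y * N / L)
        calc y * N = (y * N / L) * L := by field_simp
          _ < ((b y : ℚ) + 1) * L := by
              apply mul_lt_mul_of_pos_right this hLpos
    set U : ℚ → Set ℚ := fun x => { y | (∃ k : ℤ, (y - x) * N = (k : ℚ)) ∧ b y = b x } with hU
    have hUself : ∀ x : ℚ, x ∈ U x := fun x => ⟨⟨0, by simp⟩, rfl⟩
    -- if x, x' in same coset and same block, U x = U x'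
    have hUeq : ∀ x x' : ℚ, (∃ w : ℤ, (x' - x) * N = (w : ℚ)) → b x = b x' → U x = U x' := by
      intro x x' ⟨w, hw⟩ hbb
      ext y
      simp only [hU, Set.mem_setOf_eq]
      constructor
      · rintro ⟨⟨k, hk⟩, hby⟩
        exact ⟨⟨k - w, by push_cast; linear_combination hk - hw⟩, hby.trans hbb⟩
      · rintro ⟨⟨k, hk⟩, hby⟩
        exact ⟨⟨k + w, by push_cast; linear_combination hk + hw⟩, hby.trans hbb.symm⟩
    set C : ℝ := ρ 0 ((N : ℚ)⁻¹) with hC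
    have hCnn : 0 ≤ C := hnonneg _ _
    have hneg : ∀ z : ℚ, ρ 0 (-z) = ρ 0 z := by
      intro z
      have h1 := hdiff z 0
      rw [h_symm z 0] at h1
      simpa using h1.symm
    have hchainN : ∀ k : ℕ, ρ 0 ((k : ℚ) * (N : ℚ)⁻¹) ≤ (k : ℝ) * C := by
      intro k
      induction k with
      | zero => simp [hrefl]
      | succ n ih =>
        have t := h_triangle 0 ((n : ℚ) * (N : ℚ)⁻¹) (((n : ℚ) + 1) * (N : ℚ)⁻¹)
        have heq : ρ ((n : ℚ) * (N : ℚ)⁻¹) (((n : ℚ) + 1) * (N : ℚ)⁻¹) = C := by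
          rw [hdiff, hC]
          congr 1
          ring
        rw [heq] at t
        push_cast
        calc ρ 0 (((n : ℚ) + 1) * (N : ℚ)⁻¹) ≤ ρ 0 ((n : ℚ) * (N : ℚ)⁻¹) + C := t
          _ ≤ (n : ℝ) * C + C := by linarith
          _ = ((n : ℝ) + 1) * C := by ring
    have hchain : ∀ k : ℤ, ρ 0 ((k : ℚ) * (N : ℚ)⁻¹) ≤ (k.natAbs : ℝ) * C := by
      intro k
      obtain ⟨n, hn | hn⟩ := k.eq_nat_or_neg
      · subst hn; simpa using hchainN n
      · subst hn
        have : ((-(n : ℤ) : ℤ) : ℚ) * (N : ℚ)⁻¹ = -((n : ℚ) * (N : ℚ)⁻¹) := by push_cast; ring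
        rw [this, hneg]
        simpa using hchainN n
    refine ⟨((L : ℝ) + 1) * (C + 1), by positivity, fun i => {s | ∃ x : ℚ, s = U x ∧ (b x) % 2 = (i.val : ℤ)}, ?_, ?_, ?_⟩
    · -- bounded
      rintro i s ⟨x, rfl, -⟩ y hy y' hy'
      obtain ⟨⟨k, hk⟩, hby⟩ := hy
      obtain ⟨⟨k', hk'⟩, hby'⟩ := hy'
      have hdd : (y' - y) * N = ((k' - k : ℤ) : ℚ) := by push_cast; linear_combination hk' - hk
      have hy'y : y' - y = ((k' - k : ℤ) : ℚ) * (N : ℚ)⁻¹ := by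
        field_simp
        linarith [hdd]
      have h1b := hfloor y
      have h2b := hfloor y'
      rw [hby] at h1b
      rw [hby'] at h2b
      have habs : |((k' - k : ℤ) : ℚ)| < L := by
        rw [abs_lt]
        constructor <;> [nlinarith [h1b.1, h1b.2, h2b.1, h2b.2, hdd]; nlinarith [h1b.1, h1b.2, h2b.1, h2b.2, hdd]]
      have habsR : ((k' - k).natAbs : ℝ) ≤ (L : ℝ) := by
        have : (((k' - k).natAbs : ℚ)) < L := by
          rw [Nat.cast_natAbs, Int.cast_abs]; exact habs
        exact_mod_cast this.le
      calc ρ y y' = ρ 0 (y' - y) := hdiff y y'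
        _ = ρ 0 (((k' - k : ℤ) : ℚ) * (N : ℚ)⁻¹) := by rw [hy'y]
        _ ≤ ((k' - k).natAbs : ℝ) * C := hchain _
        _ ≤ (L : ℝ) * C := by nlinarith
        _ ≤ ((L : ℝ) + 1) * (C + 1) := by nlinarith [show (0:ℝ) ≤ (L:ℝ) from by positivity]
    · -- disjoint
      rintro i s ⟨x, rfl, hpx⟩ t ⟨x', rfl, hpx'⟩ hne y hy y' hy'
      by_contra hcon
      push_neg at hcon
      obtain ⟨⟨k, hk⟩, hby⟩ := hy
      obtain ⟨⟨k', hk'⟩, hby'⟩ := hy'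
      have hzF : y' - y ∈ F := by
        rw [hmemF]
        rw [← hdiff]
        exact hcon
      obtain ⟨j, hj⟩ := hNz _ hzF
      -- same coset for x, x'
      have hcoset : ∃ w : ℤ, (x' - x) * N = (w : ℚ) := by
        exact ⟨j + k - k', by push_cast; linear_combination hj + hk - hk'⟩
      -- block distance
      have hjb : |(j : ℚ)| < L := by
        have h1 := hLz _ hzF
        rw [← abs_of_pos hNQpos, ← abs_mul, hj] at h1
        exact h1
      have h1b := hfloor y
      have h2b := hfloor y'
      rw [hby] at h1b
      rw [hby'] at h2b
      have hdy : y' * N - y * N = (j : ℚ) := by linear_combination hj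
      -- |b x - b x'| ≤ 1
      have hblk : b x = b x' := by
        by_contra hbb
        have hpar : b x % 2 = b x' % 2 := by rw [hpx, hpx']
        have h2dvd : (2 : ℤ) ∣ (b x - b x') := by omega
        have hc2 : b x + 2 ≤ b x' ∨ b x' + 2 ≤ b x := by omega
        rw [abs_lt] at hjb
        rcases hc2 with hcc | hcc
        · have hcast : ((b x : ℚ) + 2) ≤ (b x' : ℚ) := by exact_mod_cast hcc
          have hmul : ((b x : ℚ) + 2) * L ≤ (b x' : ℚ) * L :=
            mul_le_mul_of_nonneg_right hcast hLpos.le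
          nlinarith [h1b.2, h2b.1]
        · have hcast : ((b x' : ℚ) + 2) ≤ (b x : ℚ) := by exact_mod_cast hcc
          have hmul : ((b x' : ℚ) + 2) * L ≤ (b x : ℚ) * L :=
            mul_le_mul_of_nonneg_right hcast hLpos.le
          nlinarith [h2b.2, h1b.1]
      exact hne (by rw [hUeq x x' hcoset hblk])
    · -- cover
      rw [Set.eq_univ_iff_forall]
      intro x
      rcases Int.emod_two_eq_zero_or_one (b x) with hpar | hpar
      · exact Set.mem_iUnion.mpr ⟨0, ⟨U x, ⟨x, rfl, by rw [hpar]; rfl⟩, hUself x⟩⟩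
      · exact Set.mem_iUnion.mpr ⟨1, ⟨U x, ⟨x, rfl, by rw [hpar]; rfl⟩, hUself x⟩⟩
  -- conclude
  have h1mem : (1 : ℕ∞) ∈ {m : ℕ∞ | ∃ n : ℕ, m = (n : ℕ∞) ∧ AsdimLEWith ρ n} :=
    ⟨1, by norm_num, h1⟩
  apply le_antisymm
  · exact sInf_le h1mem
  · refine le_sInf ?_
    rintro m ⟨n, rfl, hn⟩
    cases n with
    | zero => exact absurd hn h0
    | succ k =>
      have hk1 : (1 : ℕ) ≤ k + 1 := Nat.succ_le_succ (Nat.zero_le k)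
      exact_mod_cast hk1
end
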